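/- arXiv:1508.06493 — 2 statements merged into one kernel-verified Lean document; each statement's English description precedes it below -/
import Mathlib

section
/- Laver forcing is weakly homogeneous: for all Laver conditions p and q there exists an automorphism π of the partial order 𝕃 of Laver conditions such that π(p) and q are compatible (i.e., have a common lower bound). -/
/-- A set of finite sequences of naturals is closed under initial segments. -/
def PrefixClosed (p : Set (List ℕ)) : Prop := ∀ s ∈ p, ∀ t, t <+: s → t ∈ p

/-- `t` is the stem of `p`: `t ∈ p`, every `s ∈ p` is an initial segment of `t` or
extends `t`, and `t` is of maximal length with this property. -/
def IsStem (p : Set (List ℕ)) (t : List ℕ) : Prop :=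
  t ∈ p ∧ (∀ s ∈ p, s <+: t ∨ t <+: s) ∧
    ∀ t' ∈ p, (∀ s ∈ p, s <+: t' ∨ t' <+: s) → t'.length ≤ t.length

/-- `p` is a Laver condition: nonempty, closed under initial segments, has a stem `tp`,
and every `u ∈ p` extending the stem has infinitely many one-element extensions in `p`. -/
def IsLaverCond (p : Set (List ℕ)) : Prop :=
  p.Nonempty ∧ PrefixClosed p ∧
    ∃ tp, IsStem p tp ∧ ∀ u ∈ p, tp <+: u → {n : ℕ | u ++ [n] ∈ p}.Infinite

/-- The set 𝕃 of Laver conditions, ordered by `p ≤ q ↔ p ⊆ q`. -/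
abbrev LaverCond := {p : Set (List ℕ) // IsLaverCond p}

/-!
Extend the stems of `p` and `q` inside `p` and `q` to nodes `s` and `t` of the same length and
prune both conditions to the cones above them. A bijection of `ℕ^{<ω}` that, node by node,
permutes the one-point extensions of a node is an isomorphism of the prefix order and so induces
an automorphism of 𝕃. On the levels below `s` we swap `sᵢ` with `tᵢ`, which sends `s` to `t`;
above `s`, at a node `u` sent to `w`, we use a permutation of `ℕ` sending infinitely many
successors of `u` in `p` to successors of `w` in `q`, which exists for any two infinite sets.
The image of the pruned `p` then meets the pruned `q` in a Laver condition with stem `t`.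
-/

theorem Set.Infinite.exists_subset_infinite_compl {α : Type*} {A : Set α} (hA : A.Infinite) :
    ∃ A₀ ⊆ A, A₀.Infinite ∧ A₀ᶜ.Infinite := by
  set f := hA.natEmbedding
  have hf : Function.Injective (fun n => (f n : α)) := Subtype.val_injective.comp f.injective
  refine ⟨Set.range (fun n => (f (2 * n) : α)), Set.range_subset_iff.2 fun n => (f _).2,
    Set.infinite_range_of_injective (hf.comp fun a b h => by simpa using h), ?_⟩
  refine Set.infinite_of_injective_forall_mem (f := fun n => (f (2 * n + 1) : α))
    (hf.comp fun a b h => by simpa using h) ?_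
  rintro n ⟨k, hk⟩
  have := hf hk
  omega

theorem exists_perm_infinite_inter_preimage {α : Type*} [Countable α] {A B : Set α}
    (hA : A.Infinite) (hB : B.Infinite) : ∃ σ : Equiv.Perm α, (A ∩ σ ⁻¹' B).Infinite := by
  classical
  obtain ⟨A₀, hA₀A, hA₀, hA₀c⟩ := hA.exists_subset_infinite_compl
  obtain ⟨B₀, hB₀B, hB₀, hB₀c⟩ := hB.exists_subset_infinite_compl
  have := hA₀.to_subtype; have := hB₀.to_subtype
  have := hA₀c.to_subtype; have := hB₀c.to_subtype
  obtain ⟨e₀⟩ := nonempty_equiv_of_countable (α := A₀) (β := B₀)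
  obtain ⟨e₁⟩ := nonempty_equiv_of_countable (α := ↥A₀ᶜ) (β := ↥B₀ᶜ)
  refine ⟨Equiv.subtypeCongr e₀ e₁, hA₀.mono fun a ha => ⟨hA₀A ha, hB₀B ?_⟩⟩
  simp [Equiv.subtypeCongr, ha]

namespace List

variable {α : Type*}

/-- `C u w` permutes the one-point extensions of a node `u` that has been sent to `w`;
`relabel C u w l` is the image of `u ++ l` with its prefix `w` removed. -/
def relabel (C : List α → List α → Equiv.Perm α) : List α → List α → List α → List α
  | _, _, [] => []
  | u, w, a :: l => C u w a :: relabel C (u ++ [a]) (w ++ [C u w a]) l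

def relabelInv (C : List α → List α → Equiv.Perm α) : List α → List α → Equiv.Perm α :=
  fun w u => (C u w).symm

variable (C : List α → List α → Equiv.Perm α)

@[simp]
theorem length_relabel (l u w : List α) : (relabel C u w l).length = l.length := by
  induction l generalizing u w with
  | nil => rfl
  | cons a l ih => simp [relabel, ih]

theorem relabel_append (l₁ l₂ u w : List α) :
    relabel C u w (l₁ ++ l₂) =
      relabel C u w l₁ ++ relabel C (u ++ l₁) (w ++ relabel C u w l₁) l₂ := by
  induction l₁ generalizing u w with
  | nil => simp [relabel]
  | cons a l ih => simp [relabel, ih]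

theorem relabel_relabelInv (l u w : List α) :
    relabel (relabelInv C) w u (relabel C u w l) = l := by
  induction l generalizing u w with
  | nil => rfl
  | cons a l ih => simp [relabel, relabelInv, ih]

def relabelEquiv : List α ≃ List α where
  toFun := relabel C [] []
  invFun := relabel (relabelInv C) [] []
  left_inv l := relabel_relabelInv C l [] []
  right_inv l := relabel_relabelInv (relabelInv C) l [] []

theorem relabelEquiv_symm_apply (l : List α) :
    (relabelEquiv C).symm l = relabelEquiv (relabelInv C) l := rfl

@[simp]
theorem length_relabelEquiv (l : List α) : (relabelEquiv C l).length = l.length :=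
  length_relabel C l [] []

theorem relabelEquiv_append_singleton (l : List α) (a : α) :
    relabelEquiv C (l ++ [a]) = relabelEquiv C l ++ [C l (relabelEquiv C l) a] :=
  relabel_append C l [a] [] []

theorem relabelEquiv_prefix_relabelEquiv {l₁ l₂ : List α} (h : l₁ <+: l₂) :
    relabelEquiv C l₁ <+: relabelEquiv C l₂ := by
  obtain ⟨r, rfl⟩ := h
  exact ⟨_, (relabel_append C l₁ r [] []).symm⟩

@[simp]
theorem relabelEquiv_prefix_relabelEquiv_iff {l₁ l₂ : List α} :
    relabelEquiv C l₁ <+: relabelEquiv C l₂ ↔ l₁ <+: l₂ := by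
  refine ⟨fun h => ?_, relabelEquiv_prefix_relabelEquiv C⟩
  simpa [← relabelEquiv_symm_apply] using relabelEquiv_prefix_relabelEquiv (relabelInv C) h

theorem relabelEquiv_take (l : List α) (k : ℕ) :
    relabelEquiv C (l.take k) = (relabelEquiv C l).take k := by
  have h := prefix_iff_eq_take.1 (relabelEquiv_prefix_relabelEquiv C (take_prefix k l))
  rw [length_relabelEquiv, length_take, ← length_relabelEquiv C l, ← length_take] at h
  exact h.trans (prefix_iff_eq_take.1 (take_prefix k _)).symm

theorem relabel_eq_of_forall {s t u w : List α} (hlen : s.length = t.length)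
    (h : ∀ (i : ℕ) (hi : i < s.length), C (u ++ s.take i) (w ++ t.take i) s[i] = t[i]) :
    relabel C u w s = t := by
  induction s generalizing t u w with
  | nil => simpa [relabel, eq_comm] using hlen
  | cons a s ih =>
    obtain _ | ⟨b, t⟩ := t
    · simp at hlen
    have hab := h 0 (by simp)
    simp only [take_zero, append_nil, getElem_cons_zero] at hab
    simp only [relabel, hab, cons.injEq, true_and]
    refine ih (by simpa using hlen) fun i hi => ?_
    have := h (i + 1) (by simpa using hi)
    simp only [take_succ_cons, getElem_cons_succ] at this
    simpa using this

end List

open List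

/-- A Laver condition with stem `t`, except that the maximality clause of `IsStem` is dropped. -/
structure IsLaverTreeAbove (p : Set (List ℕ)) (t : List ℕ) : Prop where
  prefixClosed : PrefixClosed p
  mem : t ∈ p
  comparable : ∀ s ∈ p, s <+: t ∨ t <+: s
  infinite_succ : ∀ u ∈ p, t <+: u → {n : ℕ | u ++ [n] ∈ p}.Infinite

theorem isStem_of_succ_mem_of_ne {p : Set (List ℕ)} {u : List ℕ} {n₁ n₂ : ℕ} (hu : u ∈ p)
    (hcomp : ∀ s ∈ p, s <+: u ∨ u <+: s) (h₁ : u ++ [n₁] ∈ p) (h₂ : u ++ [n₂] ∈ p)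
    (hne : n₁ ≠ n₂) : IsStem p u := by
  refine ⟨hu, hcomp, fun t ht htcomp => ?_⟩
  by_contra! hlen
  have hpre : ∀ n, u ++ [n] ∈ p → u ++ [n] <+: t := fun n hn => by
    rcases htcomp _ hn with h | h
    · exact h
    · have := h.length_le
      simp only [length_append, length_singleton] at this
      exact (h.eq_of_length (by simp; omega)).symm ▸ prefix_refl _
  have e₁ := prefix_iff_eq_take.1 (hpre n₁ h₁)
  have e₂ := prefix_iff_eq_take.1 (hpre n₂ h₂)
  simp only [length_append, length_singleton] at e₁ e₂
  exact hne (by simpa using e₁.trans e₂.symm)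

theorem IsLaverTreeAbove.isLaverCond {p : Set (List ℕ)} {t : List ℕ}
    (h : IsLaverTreeAbove p t) : IsLaverCond p := by
  have hsucc := h.infinite_succ t h.mem (prefix_refl t)
  obtain ⟨n₁, hn₁⟩ := hsucc.nonempty
  obtain ⟨n₂, hn₂, hne⟩ := (hsucc.sdiff (Set.finite_singleton n₁)).nonempty
  exact ⟨⟨t, h.mem⟩, h.prefixClosed, t,
    isStem_of_succ_mem_of_ne h.mem h.comparable hn₁ hn₂ (Ne.symm hne), h.infinite_succ⟩

theorem isLaverCond_iff_exists_isLaverTreeAbove {p : Set (List ℕ)} :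
    IsLaverCond p ↔ ∃ t, IsLaverTreeAbove p t :=
  ⟨fun ⟨_, hpc, t, ht, hsucc⟩ => ⟨t, hpc, ht.1, ht.2.1, hsucc⟩,
    fun ⟨_, ht⟩ => ht.isLaverCond⟩

namespace IsLaverTreeAbove

variable {p : Set (List ℕ)} {t : List ℕ}

theorem exists_extension (h : IsLaverTreeAbove p t) (k : ℕ) :
    ∃ u ∈ p, t <+: u ∧ u.length = t.length + k := by
  induction k with
  | zero => exact ⟨t, h.mem, prefix_refl t, rfl⟩
  | succ k ih =>
    obtain ⟨u, hu, htu, hlen⟩ := ih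
    obtain ⟨n, hn⟩ := (h.infinite_succ u hu htu).nonempty
    exact ⟨u ++ [n], hn, htu.trans (prefix_append u [n]), by simp [hlen]; omega⟩

theorem restrict (h : IsLaverTreeAbove p t) {u : List ℕ} (hu : u ∈ p) (htu : t <+: u) :
    IsLaverTreeAbove {s ∈ p | s <+: u ∨ u <+: s} u where
  prefixClosed := by
    rintro s ⟨hs, hsu⟩ r hrs
    refine ⟨h.prefixClosed s hs r hrs, ?_⟩
    rcases hsu with hsu | hus
    · exact Or.inl (hrs.trans hsu)
    · exact prefix_or_prefix_of_prefix hrs hus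
  mem := ⟨hu, Or.inl (prefix_refl u)⟩
  comparable _ hs := hs.2
  infinite_succ v hv huv := (h.infinite_succ v hv.1 (htu.trans huv)).mono fun _ hn =>
    ⟨hn, Or.inr (huv.trans (prefix_append v _))⟩

end IsLaverTreeAbove

theorem IsLaverCond.exists_subtree {p : Set (List ℕ)} (hp : IsLaverCond p) :
    ∃ N, ∀ m ≥ N, ∃ u, ∃ p' ⊆ p, u.length = m ∧ IsLaverTreeAbove p' u := by
  obtain ⟨t, ht⟩ := isLaverCond_iff_exists_isLaverTreeAbove.1 hp
  refine ⟨t.length, fun m hm => ?_⟩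
  obtain ⟨u, hu, htu, hlen⟩ := ht.exists_extension (m - t.length)
  exact ⟨u, _, Set.sep_subset _ _, by omega, ht.restrict hu htu⟩

section Relabel

variable (C : List ℕ → List ℕ → Equiv.Perm ℕ) {p : Set (List ℕ)}

theorem PrefixClosed.image_relabelEquiv (hp : PrefixClosed p) :
    PrefixClosed (relabelEquiv C '' p) := by
  rintro _ ⟨v, hv, rfl⟩ s hs
  refine ⟨v.take s.length, hp v hv _ (take_prefix _ _), ?_⟩
  rw [relabelEquiv_take, ← prefix_iff_eq_take.1 hs]

theorem IsLaverTreeAbove.image_relabelEquiv {t : List ℕ} (h : IsLaverTreeAbove p t) :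
    IsLaverTreeAbove (relabelEquiv C '' p) (relabelEquiv C t) where
  prefixClosed := h.prefixClosed.image_relabelEquiv C
  mem := ⟨t, h.mem, rfl⟩
  comparable := by
    rintro _ ⟨v, hv, rfl⟩
    simpa using h.comparable v hv
  infinite_succ := by
    rintro _ ⟨v, hv, rfl⟩ htv
    rw [relabelEquiv_prefix_relabelEquiv_iff] at htv
    refine ((h.infinite_succ v hv htv).image (C v (relabelEquiv C v)).injective.injOn).mono ?_
    rintro _ ⟨n, hn, rfl⟩
    exact ⟨v ++ [n], hn, relabelEquiv_append_singleton C v n⟩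

theorem IsLaverCond.image_relabelEquiv (hp : IsLaverCond p) :
    IsLaverCond (relabelEquiv C '' p) := by
  obtain ⟨t, ht⟩ := isLaverCond_iff_exists_isLaverTreeAbove.1 hp
  exact (ht.image_relabelEquiv C).isLaverCond

theorem isLaverCond_image_relabelEquiv_iff :
    IsLaverCond (relabelEquiv C '' p) ↔ IsLaverCond p := by
  refine ⟨fun h => ?_, fun h => h.image_relabelEquiv C⟩
  have := h.image_relabelEquiv (relabelInv C)
  rwa [show ⇑(relabelEquiv (relabelInv C)) = ⇑(relabelEquiv C).symm from rfl,
    Equiv.symm_image_image] at this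

def laverRelabel : LaverCond ≃ LaverCond :=
  (Equiv.Set.congr (relabelEquiv C)).subtypeEquiv fun _ =>
    (isLaverCond_image_relabelEquiv_iff C).symm

theorem laverRelabel_subset_laverRelabel_iff {a b : LaverCond} :
    (laverRelabel C a).val ⊆ (laverRelabel C b).val ↔ a.val ⊆ b.val :=
  Set.image_subset_image_iff (relabelEquiv C).injective

theorem IsLaverTreeAbove.image_relabelEquiv_inter {q : Set (List ℕ)} {s t : List ℕ}
    (hp : IsLaverTreeAbove p s) (hq : IsLaverTreeAbove q t) (hst : relabelEquiv C s = t)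
    (hsucc : ∀ u ∈ p, s <+: u → relabelEquiv C u ∈ q →
      {n | u ++ [n] ∈ p ∧ relabelEquiv C u ++ [C u (relabelEquiv C u) n] ∈ q}.Infinite) :
    IsLaverTreeAbove (relabelEquiv C '' p ∩ q) t where
  prefixClosed x hx y hy :=
    ⟨hp.prefixClosed.image_relabelEquiv C x hx.1 y hy, hq.prefixClosed x hx.2 y hy⟩
  mem := ⟨⟨s, hp.mem, hst⟩, hq.mem⟩
  comparable x hx := hq.comparable x hx.2
  infinite_succ := by
    rintro _ ⟨⟨v, hv, rfl⟩, hvq⟩ htv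
    rw [← hst, relabelEquiv_prefix_relabelEquiv_iff] at htv
    refine ((hsucc v hv htv hvq).image (C v (relabelEquiv C v)).injective.injOn).mono ?_
    rintro _ ⟨n, ⟨hnp, hnq⟩, rfl⟩
    exact ⟨⟨v ++ [n], hnp, relabelEquiv_append_singleton C v n⟩, hnq⟩

end Relabel

open Classical in
noncomputable def matchingFamily (s t : List ℕ) (p q : Set (List ℕ)) (u w : List ℕ) :
    Equiv.Perm ℕ :=
  if u.length < s.length then Equiv.swap (s.getD u.length 0) (t.getD u.length 0)
  else if h : {n | u ++ [n] ∈ p}.Infinite ∧ {n | w ++ [n] ∈ q}.Infinite then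
    (exists_perm_infinite_inter_preimage h.1 h.2).choose
  else 1

theorem relabelEquiv_matchingFamily {s t : List ℕ} (p q : Set (List ℕ))
    (hlen : s.length = t.length) : relabelEquiv (matchingFamily s t p q) s = t := by
  refine relabel_eq_of_forall _ hlen fun i hi => ?_
  have hi' : i < t.length := hlen ▸ hi
  simp [matchingFamily, Nat.min_eq_left hi.le, hi, hi']

theorem matchingFamily_infinite {p q : Set (List ℕ)} {s t u w : List ℕ}
    (hp : IsLaverTreeAbove p s) (hq : IsLaverTreeAbove q t) (hu : u ∈ p) (hsu : s <+: u)
    (hw : w ∈ q) (htw : t <+: w) :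
    {n | u ++ [n] ∈ p ∧ w ++ [matchingFamily s t p q u w n] ∈ q}.Infinite := by
  have hA := hp.infinite_succ u hu hsu
  have hB := hq.infinite_succ w hw htw
  rw [matchingFamily, if_neg (not_lt.2 hsu.length_le), dif_pos ⟨hA, hB⟩]
  exact (exists_perm_infinite_inter_preimage hA hB).choose_spec

/-- Laver forcing is weakly homogeneous: for all Laver conditions `p`, `q` there is an
automorphism `π` of 𝕃 such that `π p` and `q` are compatible (have a common lower bound). -/
theorem laver_weakly_homogeneous (p q : LaverCond) :
    ∃ π : LaverCond ≃ LaverCond,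
      (∀ a b : LaverCond, a.val ⊆ b.val ↔ (π a).val ⊆ (π b).val) ∧
      ∃ r : LaverCond, r.val ⊆ (π p).val ∧ r.val ⊆ q.val := by
  obtain ⟨M, hM⟩ := p.2.exists_subtree
  obtain ⟨N, hN⟩ := q.2.exists_subtree
  obtain ⟨s, p', hp'p, hs, hp'⟩ := hM (max M N) (le_max_left _ _)
  obtain ⟨t, q', hq'q, ht, hq'⟩ := hN (max M N) (le_max_right _ _)
  set C := matchingFamily s t p' q'
  have hst : relabelEquiv C s = t := relabelEquiv_matchingFamily p' q' (hs.trans ht.symm)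
  have hr := hp'.image_relabelEquiv_inter C hq' hst fun u hu hsu hu' =>
    matchingFamily_infinite hp' hq' hu hsu hu' (hst ▸ (relabelEquiv_prefix_relabelEquiv C hsu))
  refine ⟨laverRelabel C, fun a b => (laverRelabel_subset_laverRelabel_iff C).symm,
    ⟨_, hr.isLaverCond⟩, ?_, ?_⟩
  · exact Set.inter_subset_left.trans (Set.image_mono hp'p)
  · exact Set.inter_subset_right.trans hq'q
end

section
/- If p and q are Laver conditions whose stems have equal length, then there exist Laver conditions p' ⊆ p and q' ⊆ q, having the same stems as p and q respectively, and an automorphism π of the partial order 𝕃 of Laver conditions such that π(p') = q'. -/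
/-!
Thin `p` above its stem so that each node keeps only every other successor. The successor
sets of the thinned condition `p'` are then infinite and co-infinite, so each can be carried
by a permutation of `ℕ` into the (infinite) successor set of the corresponding node of `q`.
Choosing these permutations node by node, and below the stem permutations sending `tp` to
`tq`, defines a length- and prefix-preserving bijection `e` of `ℕ^{<ω}`. Then `r ↦ e '' r`
is an automorphism of `𝕃`, and `q' := e '' p'` lies inside `q` and has stem `tq`.
-/

def children (P : Set (List ℕ)) (u : List ℕ) : Set ℕ := {n | u ++ [n] ∈ P}

theorem IsStem.unique {P : Set (List ℕ)} {a b : List ℕ} (ha : IsStem P a) (hb : IsStem P b) :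
    a = b := by
  have hab : a.length = b.length :=
    le_antisymm (hb.2.2 a ha.1 ha.2.1) (ha.2.2 b hb.1 hb.2.1)
  rcases hb.2.1 a ha.1 with h | h
  · exact h.eq_of_length hab
  · exact (h.eq_of_length hab.symm).symm

theorem IsLaverCond.children_infinite {P : Set (List ℕ)} {t u : List ℕ} (hP : IsLaverCond P)
    (hst : IsStem P t) (hu : u ∈ P) (htu : t <+: u) : (children P u).Infinite := by
  obtain ⟨t₀, hst₀, hinf⟩ := hP.2.2
  exact hinf u hu (hst₀.unique hst ▸ htu)

theorem isStem_of_children_nontrivial {P : Set (List ℕ)} {t : List ℕ} (ht : t ∈ P)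
    (hcomp : ∀ s ∈ P, s <+: t ∨ t <+: s) (hch : (children P t).Nontrivial) : IsStem P t := by
  refine ⟨ht, hcomp, fun t' ht' hcomp' => ?_⟩
  by_contra! hlong
  have htt' : t <+: t' := (hcomp t' ht').resolve_left fun h => by
    have := h.length_le; omega
  have hext : ∀ n ∈ children P t, t ++ [n] <+: t' := by
    intro n hn
    rcases hcomp' _ hn with h | h
    · exact h
    · have hlen : t'.length = (t ++ [n]).length := by
        have := h.length_le; simp only [List.length_append, List.length_singleton] at this ⊢
        omega
      rw [h.eq_of_length hlen]
  obtain ⟨a, ha, b, hb, hab⟩ := hch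
  have := (List.prefix_of_prefix_length_le (hext a ha) (hext b hb) (by simp)).eq_of_length
    (by simp)
  exact hab (by simpa using this)

noncomputable def everyOther (C : Set ℕ) : Set ℕ :=
  Set.range fun k => Nat.nth (· ∈ C) (2 * k)

section everyOther

variable {C : Set ℕ}

theorem everyOther_subset (hC : C.Infinite) : everyOther C ⊆ C := by
  rintro _ ⟨k, rfl⟩
  exact Nat.nth_mem_of_infinite hC (2 * k)

theorem everyOther_infinite (hC : C.Infinite) : (everyOther C).Infinite :=
  Set.infinite_range_of_injective fun a b hab => by
    have := Nat.nth_injective hC hab; omega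

theorem compl_everyOther_infinite (hC : C.Infinite) : (everyOther C)ᶜ.Infinite := by
  refine Set.Infinite.mono (s := Set.range fun k => Nat.nth (· ∈ C) (2 * k + 1)) ?_ ?_
  · rintro _ ⟨k, rfl⟩ ⟨j, hj⟩
    have := Nat.nth_injective hC hj; omega
  · exact Set.infinite_range_of_injective fun a b hab => by
      have := Nat.nth_injective hC hab; omega

end everyOther

theorem exists_perm_mapsTo_of_infinite_compl {α : Type*} [Countable α] {A B : Set α}
    (hA : A.Infinite) (hA' : Aᶜ.Infinite) (hB : B.Infinite) (hB' : Bᶜ.Infinite) :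
    ∃ σ : Equiv.Perm α, Set.MapsTo σ A B := by
  classical
  have := hA.to_subtype; have := hA'.to_subtype; have := hB.to_subtype; have := hB'.to_subtype
  obtain ⟨f⟩ := nonempty_equiv_of_countable (α := A) (β := B)
  obtain ⟨g⟩ := nonempty_equiv_of_countable (α := ↥Aᶜ) (β := ↥Bᶜ)
  refine ⟨(Equiv.Set.sumCompl A).symm.trans ((f.sumCongr g).trans (Equiv.Set.sumCompl B)),
    fun a ha => ?_⟩
  simp [Equiv.Set.sumCompl_symm_apply_of_mem ha]

theorem exists_perm_mapsTo {A B : Set ℕ} (hA : A.Infinite) (hA' : Aᶜ.Infinite)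
    (hB : B.Infinite) : ∃ σ : Equiv.Perm ℕ, Set.MapsTo σ A B :=
  (exists_perm_mapsTo_of_infinite_compl hA hA' (everyOther_infinite hB)
    (compl_everyOther_infinite hB)).imp fun _ h => h.mono_right (everyOther_subset hB)

def prune (P : Set (List ℕ)) (t : List ℕ) (A : List ℕ → Set ℕ) : Set (List ℕ) :=
  {s | s ∈ P ∧ ∀ u n, t <+: u → u ++ [n] <+: s → n ∈ A u}

section prune

variable {P : Set (List ℕ)} {t : List ℕ} {A : List ℕ → Set ℕ}

theorem prune_subset : prune P t A ⊆ P := fun _ hs => hs.1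

theorem PrefixClosed.prune (hP : PrefixClosed P) : PrefixClosed (prune P t A) :=
  fun s hs r hrs => ⟨hP s hs.1 r hrs, fun u n htu hun => hs.2 u n htu (hun.trans hrs)⟩

theorem mem_prune_of_prefix (hP : PrefixClosed P) (ht : t ∈ P) {s : List ℕ} (hst : s <+: t) :
    s ∈ prune P t A := by
  refine ⟨hP t ht s hst, fun u n htu hun => ?_⟩
  have := (hun.trans hst).length_le.trans htu.length_le
  simp at this

theorem children_prune {u : List ℕ} (hu : u ∈ prune P t A) (htu : t <+: u) :
    children (prune P t A) u = children P u ∩ A u := by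
  ext n
  refine ⟨fun hn => ⟨hn.1, hn.2 u n htu List.prefix_rfl⟩,
    fun hn => ⟨hn.1, fun v m htv hvm => ?_⟩⟩
  rcases List.prefix_concat_iff.mp hvm with h | h
  · obtain ⟨rfl, hmn⟩ := List.append_inj' h rfl
    obtain rfl : m = n := by simpa using hmn
    exact hn.2
  · exact hu.2 v m htv h

theorem IsLaverCond.isStem_prune (hP : IsLaverCond P) (hst : IsStem P t)
    (hA : ∀ u ∈ P, t <+: u → (children P u ∩ A u).Infinite) : IsStem (prune P t A) t := by
  have ht : t ∈ prune P t A := mem_prune_of_prefix hP.2.1 hst.1 List.prefix_rfl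
  refine isStem_of_children_nontrivial ht (fun s hs => hst.2.1 s hs.1) ?_
  rw [children_prune ht List.prefix_rfl]
  exact (hA t hst.1 List.prefix_rfl).nontrivial

theorem IsLaverCond.prune (hP : IsLaverCond P) (hst : IsStem P t)
    (hA : ∀ u ∈ P, t <+: u → (children P u ∩ A u).Infinite) : IsLaverCond (prune P t A) :=
  ⟨⟨t, mem_prune_of_prefix hP.2.1 hst.1 List.prefix_rfl⟩, hP.2.1.prune, t,
    hP.isStem_prune hst hA, fun u hu htu => by
      rw [← children, children_prune hu htu]; exact hA u hu.1 htu⟩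

end prune

structure IsTreeEquiv (e : List ℕ ≃ List ℕ) : Prop where
  length_apply : ∀ s, (e s).length = s.length
  prefix_iff : ∀ s t, e s <+: e t ↔ s <+: t

namespace IsTreeEquiv

variable {e : List ℕ ≃ List ℕ} (he : IsTreeEquiv e)
include he

theorem symm : IsTreeEquiv e.symm where
  length_apply s := by simpa using (he.length_apply (e.symm s)).symm
  prefix_iff s t := by simpa using (he.prefix_iff (e.symm s) (e.symm t)).symm

theorem exists_apply_append_singleton (v : List ℕ) (k : ℕ) :
    ∃ n, e (v ++ [k]) = e v ++ [n] := by
  obtain ⟨r, hr⟩ := (he.prefix_iff v (v ++ [k])).mpr (List.prefix_append v [k])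
  have hlen : r.length = 1 := by
    have := congrArg List.length hr
    simp only [List.length_append, he.length_apply, List.length_singleton] at this
    omega
  obtain ⟨n, rfl⟩ := List.length_eq_one_iff.mp hlen
  exact ⟨n, hr.symm⟩

theorem isStem_image {P : Set (List ℕ)} {t : List ℕ} (hst : IsStem P t) :
    IsStem (e '' P) (e t) := by
  refine ⟨⟨t, hst.1, rfl⟩, ?_, ?_⟩
  · rintro _ ⟨s, hs, rfl⟩
    simpa only [he.prefix_iff] using hst.2.1 s hs
  · rintro _ ⟨t', ht', rfl⟩ hcomp
    rw [he.length_apply, he.length_apply]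
    refine hst.2.2 t' ht' fun s hs => ?_
    simpa only [he.prefix_iff] using hcomp (e s) ⟨s, hs, rfl⟩

theorem isLaverCond_image {P : Set (List ℕ)} (hP : IsLaverCond P) : IsLaverCond (e '' P) := by
  obtain ⟨hne, hcl, t, hst, hinf⟩ := hP
  refine ⟨hne.image e, ?_, e t, he.isStem_image hst, ?_⟩
  · rintro _ ⟨s, hs, rfl⟩ r hr
    refine ⟨e.symm r, hcl s hs _ ?_, e.apply_symm_apply r⟩
    rwa [← he.prefix_iff, e.apply_symm_apply]
  · rintro _ ⟨v, hv, rfl⟩ htv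
    choose c hc using he.exists_apply_append_singleton v
    have hinj : Set.InjOn c (children P v) := fun k _ k' _ hkk' => by
      have : v ++ [k] = v ++ [k'] := e.injective (by rw [hc k, hc k', hkk'])
      simpa using this
    refine ((hinf v hv ((he.prefix_iff t v).mp htv)).image hinj).mono ?_
    rintro _ ⟨k, hk, rfl⟩
    exact ⟨v ++ [k], hk, hc k⟩

def laverEquiv : LaverCond ≃ LaverCond where
  toFun p := ⟨e '' p.1, he.isLaverCond_image p.2⟩
  invFun p := ⟨e.symm '' p.1, he.symm.isLaverCond_image p.2⟩
  left_inv p := Subtype.ext (e.symm_image_image p.1)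
  right_inv p := Subtype.ext (e.image_symm_image p.1)

theorem laverEquiv_subset_iff (p q : LaverCond) :
    (he.laverEquiv p).1 ⊆ (he.laverEquiv q).1 ↔ p.1 ⊆ q.1 :=
  Set.image_subset_image_iff e.injective

end IsTreeEquiv

section treeMap

variable (σ : List ℕ → List ℕ → Equiv.Perm ℕ)

/-- `treeMap σ` on reversed lists, so that it can be defined by structural recursion. -/
def treeMapRev : List ℕ → List ℕ
  | [] => []
  | m :: r => σ r.reverse (treeMapRev r).reverse m :: treeMapRev r

def treeMap (s : List ℕ) : List ℕ := (treeMapRev σ s.reverse).reverse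

@[simp] theorem treeMap_nil : treeMap σ [] = [] := rfl

theorem treeMap_append_singleton (s : List ℕ) (m : ℕ) :
    treeMap σ (s ++ [m]) = treeMap σ s ++ [σ s (treeMap σ s) m] := by
  simp [treeMap, treeMapRev]

@[simp] theorem treeMap_length (s : List ℕ) : (treeMap σ s).length = s.length := by
  induction s using List.reverseRecOn with
  | nil => rfl
  | append_singleton s m ih => simp [treeMap_append_singleton, ih]

theorem treeMap_take (s : List ℕ) (k : ℕ) : treeMap σ (s.take k) = (treeMap σ s).take k := by
  induction s using List.reverseRecOn with
  | nil => simp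
  | append_singleton s m ih =>
    rcases le_or_gt k s.length with h | h
    · rw [List.take_append_of_le_length h, ih, treeMap_append_singleton,
        List.take_append_of_le_length (by simpa using h)]
    · rw [List.take_of_length_le (by simpa using h), List.take_of_length_le (by simpa using h)]

theorem treeMap_injective : Function.Injective (treeMap σ) := by
  intro s
  induction s using List.reverseRecOn with
  | nil => intro t h; simpa using congrArg List.length h.symm
  | append_singleton s m ih =>
    intro t h
    rcases List.eq_nil_or_concat' t with rfl | ⟨t, n, rfl⟩
    · simpa using congrArg List.length h
    rw [treeMap_append_singleton, treeMap_append_singleton] at h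
    obtain ⟨hst, hmn⟩ := List.append_inj' h rfl
    obtain rfl := ih hst
    obtain rfl : m = n := (σ s (treeMap σ s)).injective (by simpa using hmn)
    rfl

theorem treeMap_surjective : Function.Surjective (treeMap σ) := by
  intro t
  induction t using List.reverseRecOn with
  | nil => exact ⟨[], rfl⟩
  | append_singleton t n ih =>
    obtain ⟨s, rfl⟩ := ih
    exact ⟨s ++ [(σ s (treeMap σ s)).symm n], by simp [treeMap_append_singleton]⟩

theorem treeMap_prefix_iff (s t : List ℕ) : treeMap σ s <+: treeMap σ t ↔ s <+: t := by
  rw [List.prefix_iff_eq_take, List.prefix_iff_eq_take, treeMap_length, ← treeMap_take,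
    (treeMap_injective σ).eq_iff]

noncomputable def treeEquiv : List ℕ ≃ List ℕ :=
  Equiv.ofBijective (treeMap σ) ⟨treeMap_injective σ, treeMap_surjective σ⟩

theorem isTreeEquiv_treeEquiv : IsTreeEquiv (treeEquiv σ) :=
  ⟨treeMap_length σ, treeMap_prefix_iff σ⟩

end treeMap

section nodePerm

variable (p q : Set (List ℕ)) (tp tq : List ℕ)

/-- Above the stem, the thinned successor sets of `p` are co-infinite: this is what makes a
permutation carrying them into the successor sets of `q` exist. -/
noncomputable def nodePerm (s t : List ℕ) : Equiv.Perm ℕ :=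
  if s.length < tp.length then Equiv.swap (tp.getD s.length 0) (tq.getD s.length 0)
  else Classical.epsilon fun σ : Equiv.Perm ℕ =>
    Set.MapsTo σ (everyOther (children p s)) (children q t)

def thinned : Set (List ℕ) := prune p tp fun u => everyOther (children p u)

variable {p q tp tq}

theorem treeMap_nodePerm_take (hlen : tp.length = tq.length) {k : ℕ} (hk : k ≤ tp.length) :
    treeMap (nodePerm p q tp tq) (tp.take k) = tq.take k := by
  induction k with
  | zero => simp
  | succ k ih =>
    have hkp : k < tp.length := hk
    have hkq : k < tq.length := hlen ▸ hkp
    have hnode : nodePerm p q tp tq (tp.take k) (tq.take k) tp[k] = tq[k] := by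
      simp [nodePerm, hkp, hkp.le, hkq]
    rw [List.take_succ_eq_append_getElem hkp, treeMap_append_singleton, ih hkp.le, hnode,
      List.take_succ_eq_append_getElem hkq]

theorem treeMap_nodePerm_stem (hlen : tp.length = tq.length) :
    treeMap (nodePerm p q tp tq) tp = tq := by
  have h := treeMap_nodePerm_take (p := p) (q := q) hlen le_rfl
  rwa [List.take_length, hlen, List.take_length] at h

theorem IsLaverCond.inter_everyOther_children_infinite (hp : IsLaverCond p)
    (hsp : IsStem p tp) {u : List ℕ} (hu : u ∈ p) (htu : tp <+: u) :
    (children p u ∩ everyOther (children p u)).Infinite := by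
  have hinf := hp.children_infinite hsp hu htu
  rw [Set.inter_eq_right.mpr (everyOther_subset hinf)]
  exact everyOther_infinite hinf

theorem IsLaverCond.isLaverCond_thinned (hp : IsLaverCond p) (hsp : IsStem p tp) :
    IsLaverCond (thinned p tp) :=
  hp.prune hsp fun _ => hp.inter_everyOther_children_infinite hsp

theorem IsLaverCond.isStem_thinned (hp : IsLaverCond p) (hsp : IsStem p tp) :
    IsStem (thinned p tp) tp :=
  hp.isStem_prune hsp fun _ => hp.inter_everyOther_children_infinite hsp

theorem treeMap_nodePerm_mem (hp : IsLaverCond p) (hq : IsLaverCond q) (hsp : IsStem p tp)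
    (hsq : IsStem q tq) (hlen : tp.length = tq.length) {s : List ℕ} (hs : s ∈ thinned p tp) :
    treeMap (nodePerm p q tp tq) s ∈ q := by
  have hstem := treeMap_nodePerm_stem (p := p) (q := q) hlen
  have below : ∀ s, s <+: tp → treeMap (nodePerm p q tp tq) s ∈ q := fun s hs => by
    have h := (treeMap_prefix_iff (nodePerm p q tp tq) s tp).mpr hs
    rw [hstem] at h
    exact hq.2.1 tq hsq.1 _ h
  induction s using List.reverseRecOn with
  | nil => exact below [] List.nil_prefix
  | append_singleton s m ih =>
    rcases hsp.2.1 _ hs.1 with h | h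
    · exact below _ h
    rcases List.prefix_concat_iff.mp h with h | htps
    · exact below _ (h ▸ List.prefix_rfl)
    have hs' : s ∈ thinned p tp := hp.2.1.prune _ hs s (List.prefix_append s [m])
    have hfs := (treeMap_prefix_iff (nodePerm p q tp tq) tp s).mpr htps
    rw [hstem] at hfs
    have hinf := hp.children_infinite hsp hs'.1 htps
    have hmaps : Set.MapsTo (nodePerm p q tp tq s (treeMap (nodePerm p q tp tq) s))
        (everyOther (children p s)) (children q (treeMap (nodePerm p q tp tq) s)) := by
      rw [nodePerm, if_neg (not_lt.mpr htps.length_le)]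
      exact Classical.epsilon_spec (exists_perm_mapsTo (everyOther_infinite hinf)
        (compl_everyOther_infinite hinf) (hq.children_infinite hsq (ih hs') hfs))
    rw [treeMap_append_singleton]
    exact hmaps (hs.2 s m htps List.prefix_rfl)

end nodePerm

/-- If `p` and `q` are Laver conditions whose stems `tp`, `tq` have equal length, then
there are Laver conditions `p' ⊆ p` and `q' ⊆ q` with the same stems `tp`, `tq`
respectively, and an automorphism `π` of 𝕃 with `π p' = q'`. -/
theorem laver_thinned_automorphism (p q : Set (List ℕ)) (tp tq : List ℕ)
    (hp : IsLaverCond p) (hq : IsLaverCond q)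
    (hsp : IsStem p tp) (hsq : IsStem q tq) (hlen : tp.length = tq.length) :
    ∃ p' q' : LaverCond, p'.val ⊆ p ∧ q'.val ⊆ q ∧
      IsStem p'.val tp ∧ IsStem q'.val tq ∧
      ∃ π : LaverCond ≃ LaverCond,
        (∀ a b : LaverCond, a.val ⊆ b.val ↔ (π a).val ⊆ (π b).val) ∧ π p' = q' := by
  have he := isTreeEquiv_treeEquiv (nodePerm p q tp tq)
  have hp' := hp.isLaverCond_thinned hsp
  have hstem' := hp.isStem_thinned hsp
  refine ⟨⟨_, hp'⟩, he.laverEquiv ⟨_, hp'⟩, prune_subset, ?_, hstem', ?_, he.laverEquiv,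
    fun a b => (he.laverEquiv_subset_iff a b).symm, rfl⟩
  · rintro _ ⟨s, hs, rfl⟩
    exact treeMap_nodePerm_mem hp hq hsp hsq hlen hs
  · have h := he.isStem_image hstem'
    rwa [show treeEquiv _ tp = tq from treeMap_nodePerm_stem hlen] at h
end
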